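/- arXiv:1512.04890 — 7 statements merged into one kernel-verified Lean document; each statement's English description precedes it below -/
import Mathlib

section
/- Let p be an odd prime, n a natural number with p ≤ n, and t the natural number with p^t ≤ n < p^(t+1). Then exp_p(A_n) = p^t. -/
/-!
A permutation whose order is a power of `p` has cycle lengths that are powers of `p`, each at most
`n`, so its order divides `p ^ t`; this bounds the `p`-part of the exponent of `A_n`. Conversely a
`p ^ t`-cycle has odd order, hence is an even permutation, and it lies in `A_n`.
-/

namespace Equiv.Perm

variable {α : Type*} [Fintype α] [DecidableEq α]

theorem exists_orderOf_eq_of_le_card {m : ℕ} (hm : 0 < m) (hcard : m ≤ Fintype.card α) :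
    ∃ σ : Perm α, orderOf σ = m := by
  rcases Nat.lt_or_ge m 2 with hm1 | hm2
  · obtain rfl : m = 1 := by omega
    exact ⟨1, orderOf_one⟩
  obtain ⟨σ, hσ⟩ : ∃ σ : Perm α, σ.cycleType = {m} :=
    (exists_with_cycleType_iff α).2 ⟨by simpa using hcard, by simpa using hm2⟩
  exact ⟨σ, by rw [← lcm_cycleType, hσ, Multiset.lcm_singleton, normalize_eq]⟩

theorem mem_alternatingGroup_of_odd_orderOf {σ : Perm α} (h : Odd (orderOf σ)) :
    σ ∈ alternatingGroup α := by
  have hpow : sign σ ^ orderOf σ = 1 := by rw [← map_pow, pow_orderOf_eq_one, map_one]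
  rcases Int.units_eq_one_or (sign σ) with hsign | hsign
  · exact mem_alternatingGroup.2 hsign
  · rw [hsign, h.neg_one_pow] at hpow
    exact absurd hpow (by decide)

theorem orderOf_dvd_prime_pow_of_card_lt {σ : Perm α} {p k j : ℕ} (hp : p.Prime)
    (hσ : orderOf σ ∣ p ^ k) (hcard : Fintype.card α < p ^ (j + 1)) : orderOf σ ∣ p ^ j := by
  rw [← lcm_cycleType]
  refine Multiset.lcm_dvd.2 fun a ha => ?_
  obtain ⟨i, -, rfl⟩ := (Nat.dvd_prime_pow hp).1 ((dvd_of_mem_cycleType ha).trans hσ)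
  have hle : p ^ i < p ^ (j + 1) :=
    ((le_card_support_of_mem_cycleType ha).trans (Finset.card_le_univ _)).trans_lt hcard
  exact pow_dvd_pow p (Nat.lt_succ_iff.1 ((Nat.pow_lt_pow_iff_right hp.one_lt).1 hle))

end Equiv.Perm

theorem Monoid.factorization_exponent_le {G : Type*} [Monoid G] {p j : ℕ} (hp : p.Prime)
    (h : ∀ (g : G) (k : ℕ), orderOf g = p ^ k → k ≤ j) : (exponent G).factorization p ≤ j := by
  obtain ⟨g, hg⟩ := hp.exists_orderOf_eq_pow_factorization_exponent G
  exact h g _ hg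

theorem exponent_p_part_alternatingGroup_general (p n t : ℕ) (hp : p.Prime) (hodd : Odd p)
    (ht1 : p ^ t ≤ n) (ht2 : n < p ^ (t + 1)) :
    p ^ t ∣ Monoid.exponent (alternatingGroup (Fin n)) ∧
      ¬ p ^ (t + 1) ∣ Monoid.exponent (alternatingGroup (Fin n)) := by
  constructor
  · obtain ⟨σ, hσ⟩ := Equiv.Perm.exists_orderOf_eq_of_le_card (α := Fin n) (pow_pos hp.pos t)
      (by rwa [Fintype.card_fin])
    have hmem := Equiv.Perm.mem_alternatingGroup_of_odd_orderOf (hσ ▸ hodd.pow)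
    simpa [hσ] using Monoid.order_dvd_exponent (⟨σ, hmem⟩ : alternatingGroup (Fin n))
  · have hle : (Monoid.exponent (alternatingGroup (Fin n))).factorization p ≤ t := by
      refine Monoid.factorization_exponent_le hp fun g k hg => ?_
      have hdvd := Equiv.Perm.orderOf_dvd_prime_pow_of_card_lt hp
        (Subgroup.orderOf_coe g ▸ hg).dvd (by rwa [Fintype.card_fin])
      rwa [Subgroup.orderOf_coe, hg, Nat.pow_dvd_pow_iff_le_right hp.one_lt] at hdvd
    rwa [hp.pow_dvd_iff_le_factorization Monoid.exponent_ne_zero_of_finite, not_le,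
      Nat.lt_succ_iff]

/-- For an odd prime `p ≤ n`, with `p^t ≤ n < p^(t+1)`, the `p`-part of the exponent
of the alternating group `A_n` is `p^t`. -/
theorem exponent_p_part_alternatingGroup (p n t : ℕ) (hp : p.Prime) (hodd : Odd p)
    (hpn : p ≤ n) (ht1 : p ^ t ≤ n) (ht2 : n < p ^ (t + 1)) :
    p ^ t ∣ Monoid.exponent (alternatingGroup (Fin n)) ∧
      ¬ p ^ (t + 1) ∣ Monoid.exponent (alternatingGroup (Fin n)) :=
  exponent_p_part_alternatingGroup_general p n t hp hodd ht1 ht2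
end

section
/- Let n ≥ 4 be a natural number and t the natural number with 2^t + 2 ≤ n < 2^(t+1) + 2. Then exp_2(A_n) = 2^t. -/
set_option maxHeartbeats 1000000

open Equiv Equiv.Perm

/-- If a prime power divides the lcm of two nonzero naturals, it divides one of them. -/
lemma pow_dvd_of_dvd_lcm {p k a b : ℕ} (hp : p.Prime) (ha : a ≠ 0) (hb : b ≠ 0)
    (h : p ^ k ∣ Nat.lcm a b) : p ^ k ∣ a ∨ p ^ k ∣ b := by
  have hlcm : Nat.lcm a b ≠ 0 := Nat.lcm_ne_zero ha hb
  rw [hp.pow_dvd_iff_le_factorization hlcm, Nat.factorization_lcm ha hb] at h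
  simp only [Finsupp.sup_apply, le_sup_iff] at h
  rcases h with h | h
  · exact Or.inl ((hp.pow_dvd_iff_le_factorization ha).mpr h)
  · exact Or.inr ((hp.pow_dvd_iff_le_factorization hb).mpr h)

/-- If a nontrivial prime power divides the lcm of a multiset of nonzero naturals,
it divides some member. -/
lemma pow_dvd_of_dvd_multiset_lcm {p k : ℕ} (hp : p.Prime) (hk : k ≠ 0) :
    ∀ (s : Multiset ℕ), (0 : ℕ) ∉ s → p ^ k ∣ s.lcm → ∃ a ∈ s, p ^ k ∣ a := by
  intro s
  induction s using Multiset.induction with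
  | empty =>
    intro _ h
    rw [Multiset.lcm_zero] at h
    have h1 : p ^ k ≤ 1 := Nat.le_of_dvd one_pos h
    have h2 : 2 ≤ p := hp.two_le
    have : 2 ^ k ≤ p ^ k := Nat.pow_le_pow_left h2 k
    have : 2 ≤ 2 ^ k := by
      calc 2 = 2 ^ 1 := (pow_one 2).symm
      _ ≤ 2 ^ k := Nat.pow_le_pow_right (by norm_num) (Nat.one_le_iff_ne_zero.mpr hk)
    omega
  | cons a s ih =>
    intro h0 h
    rw [Multiset.lcm_cons] at h
    have ha : a ≠ 0 := fun h' => h0 (h' ▸ Multiset.mem_cons_self a s)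
    have hs0 : (0 : ℕ) ∉ s := fun h' => h0 (Multiset.mem_cons_of_mem h')
    have hslcm : s.lcm ≠ 0 := by
      rw [Ne, Multiset.lcm_eq_zero_iff]
      exact fun h' => hs0 h'
    rcases pow_dvd_of_dvd_lcm hp ha hslcm h with h | h
    · exact ⟨a, Multiset.mem_cons_self a s, h⟩
    · obtain ⟨b, hb, hdvd⟩ := ih hs0 h
      exact ⟨b, Multiset.mem_cons_of_mem hb, hdvd⟩

/-- No even element of `Perm (Fin n)` has order divisible by `2^(t+1)` when
`n < 2^(t+1) + 2`. -/
lemma no_large_two_part (n t : ℕ) (ht2 : n < 2 ^ (t + 1) + 2) (σ : Equiv.Perm (Fin n))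
    (hσ : Equiv.Perm.sign σ = 1) : ¬ 2 ^ (t + 1) ∣ orderOf σ := by
  intro hdvd
  rw [← Equiv.Perm.lcm_cycleType] at hdvd
  have h0 : (0 : ℕ) ∉ σ.cycleType := fun h =>
    absurd (Equiv.Perm.two_le_of_mem_cycleType h) (by norm_num)
  obtain ⟨L, hL, hLdvd⟩ :=
    pow_dvd_of_dvd_multiset_lcm Nat.prime_two (k := t + 1) (by omega) _ h0 hdvd
  -- L ≤ n
  have hsum : σ.cycleType.sum ≤ n := by
    rw [Equiv.Perm.sum_cycleType]
    calc σ.support.card ≤ Fintype.card (Fin n) := Finset.card_le_univ _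
    _ = n := Fintype.card_fin n
  have hLle : L ≤ σ.cycleType.sum := Multiset.le_sum_of_mem hL
  have hL2 : 2 ≤ L := Equiv.Perm.two_le_of_mem_cycleType hL
  -- L = 2^(t+1)
  have hLeq : L = 2 ^ (t + 1) := by
    have h2 : 2 ≤ 2 ^ (t + 1) := by
      calc 2 = 2 ^ 1 := (pow_one 2).symm
      _ ≤ 2 ^ (t + 1) := Nat.pow_le_pow_right (by norm_num) (by omega)
    have hge : 2 ^ (t + 1) ≤ L := Nat.le_of_dvd (by omega) hLdvd
    have hlt : L < 2 ^ (t + 1) + 2 ^ (t + 1) := by omega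
    obtain ⟨c, hc⟩ := hLdvd
    have hc0 : c ≠ 0 := by rintro rfl; rw [mul_zero] at hc; omega
    have hc2 : c < 2 := by
      by_contra hcc
      push_neg at hcc
      have : 2 ^ (t + 1) * 2 ≤ 2 ^ (t + 1) * c := Nat.mul_le_mul_left _ hcc
      omega
    have hc1 : c = 1 := by omega
    rw [hc1, mul_one] at hc
    exact hc
  -- cycleType = {L}
  have hct : σ.cycleType = {L} := by
    obtain ⟨s, hs⟩ : ∃ s, σ.cycleType = L ::ₘ s := ⟨σ.cycleType.erase L,
      (Multiset.cons_erase hL).symm⟩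
    have hs0 : s = 0 := by
      by_contra hne
      obtain ⟨b, hb⟩ := Multiset.exists_mem_of_ne_zero hne
      have hb2 : 2 ≤ b := Equiv.Perm.two_le_of_mem_cycleType
        (hs ▸ Multiset.mem_cons_of_mem hb)
      have : b ≤ s.sum := Multiset.le_sum_of_mem hb
      rw [hs, Multiset.sum_cons] at hsum
      omega
    rw [hs, hs0]
    rfl
  -- sign contradiction
  rw [Equiv.Perm.sign_of_cycleType, hct] at hσ
  simp only [Multiset.sum_singleton, Multiset.card_singleton] at hσ
  rw [hLeq] at hσ
  have hodd : ¬ 2 ∣ (2 ^ (t + 1) + 1) := by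
    have : 2 ∣ 2 ^ (t + 1) := dvd_pow_self 2 (by omega : t + 1 ≠ 0)
    omega
  rw [Odd.neg_one_pow (Nat.odd_iff.mpr (by omega))] at hσ
  exact absurd hσ (by decide)

/-- For `n ≥ 4` with `2^t + 2 ≤ n < 2^(t+1) + 2`, the `2`-part of the exponent of
the alternating group `A_n` is `2^t`. -/
theorem exponent_two_part_alternatingGroup (n t : ℕ) (hn : 4 ≤ n)
    (ht1 : 2 ^ t + 2 ≤ n) (ht2 : n < 2 ^ (t + 1) + 2) :
    2 ^ t ∣ Monoid.exponent (alternatingGroup (Fin n)) ∧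
      ¬ 2 ^ (t + 1) ∣ Monoid.exponent (alternatingGroup (Fin n)) := by
  constructor
  · -- lower bound: exhibit an element of order divisible by 2^t
    rcases Nat.eq_zero_or_pos t with rfl | htpos
    · simpa using one_dvd _
    -- t ≥ 1: build a 2^t-cycle times a disjoint transposition
    obtain ⟨m, rfl⟩ : ∃ m, n = m + 1 := ⟨n - 1, by omega⟩
    have h2t : 2 ≤ 2 ^ t := by
      calc 2 = 2 ^ 1 := (pow_one 2).symm
      _ ≤ 2 ^ t := Nat.pow_le_pow_right (by norm_num) htpos
    set i : Fin (m + 1) := ⟨2 ^ t - 1, by omega⟩ with hi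
    set a : Fin (m + 1) := ⟨2 ^ t, by omega⟩ with ha
    set b : Fin (m + 1) := ⟨2 ^ t + 1, by omega⟩ with hb
    have hab : a ≠ b := by simp [ha, hb, Fin.ext_iff]
    have hi0 : i ≠ 0 := by simp [hi, Fin.ext_iff]; omega
    set σ : Equiv.Perm (Fin (m + 1)) := Fin.cycleRange i * Equiv.swap a b with hσdef
    -- disjointness
    have hdisj : (Fin.cycleRange i).Disjoint (Equiv.swap a b) := by
      intro x
      rcases eq_or_ne x a with rfl | hxa
      · left
        apply Fin.cycleRange_of_gt
        rw [Fin.lt_iff_val_lt_val]; simp [hi, ha] <;> omega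
      rcases eq_or_ne x b with rfl | hxb
      · left
        apply Fin.cycleRange_of_gt
        rw [Fin.lt_iff_val_lt_val]; simp [hi, hb] <;> omega
      · right
        exact Equiv.swap_apply_of_ne_of_ne hxa hxb
    -- order
    have hordc : orderOf (Fin.cycleRange i) = 2 ^ t := by
      rw [← Equiv.Perm.lcm_cycleType, Fin.cycleType_cycleRange hi0]
      simp [hi]
      omega
    have hords : orderOf (Equiv.swap a b) = 2 := by
      haveI : Fact (Nat.Prime 2) := ⟨Nat.prime_two⟩
      refine orderOf_eq_prime ?_ (by simpa using hab)
      rw [sq]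
      exact Equiv.swap_mul_self a b
    have hord : orderOf σ = 2 ^ t := by
      rw [hσdef, hdisj.orderOf, hordc, hords]
      exact Nat.dvd_antisymm (Nat.lcm_dvd dvd_rfl (dvd_pow_self 2 (by omega)))
        (Nat.dvd_lcm_left _ _)
    -- membership in the alternating group
    have hmem : σ ∈ alternatingGroup (Fin (m + 1)) := by
      rw [Equiv.Perm.mem_alternatingGroup, hσdef, map_mul, Fin.sign_cycleRange,
        Equiv.Perm.sign_swap hab]
      have h2d : (2 : ℕ) ∣ 2 ^ t := dvd_pow_self 2 (by omega)
      have : (i : ℕ) = 2 ^ t - 1 := rfl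
      rw [this, Odd.neg_one_pow (Nat.odd_iff.mpr (by omega))]
      simp
    -- conclude
    have : orderOf (⟨σ, hmem⟩ : alternatingGroup (Fin (m + 1))) = 2 ^ t := by
      rw [← hord]
      exact Subgroup.orderOf_mk σ hmem
    rw [← this]
    exact Monoid.order_dvd_exponent _
  · -- upper bound
    intro hdvd
    obtain ⟨g, hg⟩ := Nat.prime_two.exists_orderOf_eq_pow_factorization_exponent
      (G := alternatingGroup (Fin n))
    have hexp : Monoid.exponent (alternatingGroup (Fin n)) ≠ 0 :=
      Monoid.exponent_ne_zero_of_finite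
    have hfac : t + 1 ≤ (Monoid.exponent (alternatingGroup (Fin n))).factorization 2 :=
      (Nat.prime_two.pow_dvd_iff_le_factorization hexp).mp hdvd
    have hdvd' : 2 ^ (t + 1) ∣ orderOf g := by
      rw [hg]
      exact pow_dvd_pow 2 hfac
    have hdvd'' : 2 ^ (t + 1) ∣ orderOf (g : Equiv.Perm (Fin n)) := by
      exact_mod_cast hdvd'
    exact no_large_two_part n t ht2 (g : Equiv.Perm (Fin n))
      (Equiv.Perm.mem_alternatingGroup.mp g.2) hdvd''
end

section
/- Let n ≥ 5 be a natural number such that n is not a power of an odd prime and n ≠ 2^r + 2 for every natural number r. Then exp(A_{n-1}) = exp(A_n). -/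
lemma multiset_lcm_ne_zero (s : Multiset ℕ) (hs : ∀ a ∈ s, a ≠ 0) : s.lcm ≠ 0 := by
  induction s using Multiset.induction_on with
  | empty => simp
  | cons a s ih =>
    rw [Multiset.lcm_cons]
    exact Nat.lcm_ne_zero (hs a (Multiset.mem_cons_self a s))
      (ih fun b hb => hs b (Multiset.mem_cons_of_mem hb))

/-- If a prime power divides the lcm of a multiset of nonzero naturals, it divides
some element (or equals 1). -/
lemma pow_dvd_multiset_lcm {p k : ℕ} (hp : p.Prime) (s : Multiset ℕ)
    (hs : ∀ a ∈ s, a ≠ 0) (h : p ^ k ∣ s.lcm) : k = 0 ∨ ∃ a ∈ s, p ^ k ∣ a := by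
  induction s using Multiset.induction_on with
  | empty =>
    left
    simp only [Multiset.lcm_zero] at h
    have h1 := Nat.le_of_dvd one_pos h
    by_contra hk
    exact absurd (Nat.one_lt_pow hk hp.one_lt).not_ge (not_not.mpr h1)
  | cons a s ih =>
    rw [Multiset.lcm_cons] at h
    have ha : a ≠ 0 := hs a (Multiset.mem_cons_self a s)
    have hslcm : s.lcm ≠ 0 :=
      multiset_lcm_ne_zero s fun b hb => hs b (Multiset.mem_cons_of_mem hb)
    have hle : k ≤ (Nat.lcm a s.lcm).factorization p := by
      rw [← Nat.Prime.pow_dvd_iff_le_factorization hp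
        (Nat.lcm_ne_zero ha hslcm)]
      exact h
    rw [Nat.factorization_lcm ha hslcm, Finsupp.sup_apply, le_sup_iff] at hle
    rcases hle with hle | hle
    · right
      exact ⟨a, Multiset.mem_cons_self a s,
        (Nat.Prime.pow_dvd_iff_le_factorization hp ha).mpr hle⟩
    · rcases ih (fun b hb => hs b (Multiset.mem_cons_of_mem hb))
        ((Nat.Prime.pow_dvd_iff_le_factorization hp hslcm).mpr hle) with
        hk | ⟨b, hb, hbd⟩
      · exact Or.inl hk
      · exact Or.inr ⟨b, Multiset.mem_cons_of_mem hb, hbd⟩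

lemma odd_multiset_sum_add_card_even (s : Multiset ℕ) (hs : ∀ a ∈ s, ¬ Even a) :
    Even (s.sum + Multiset.card s) := by
  induction s using Multiset.induction_on with
  | empty => simp
  | cons a s ih =>
    rw [Multiset.sum_cons, Multiset.card_cons]
    have hodd : Odd a := Nat.not_even_iff_odd.mp (hs a (Multiset.mem_cons_self a s))
    have heven := ih fun b hb => hs b (Multiset.mem_cons_of_mem hb)
    have : a + s.sum + (Multiset.card s + 1) = (a + 1) + (s.sum + Multiset.card s) := by ring
    rw [this]
    exact (Nat.even_add_one.mpr (Nat.not_even_iff_odd.mpr hodd)).add heven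

/-- If `m` is a multiset of numbers `≥ 2` with sum at most `card α`, then `m.lcm` divides
the exponent of the alternating group on `α`, provided `m.sum + m.card` is even. -/
lemma dvd_exponent_alternatingGroup {α : Type*} [Fintype α] [DecidableEq α]
    (m : Multiset ℕ) (hsum : m.sum ≤ Fintype.card α) (h2 : ∀ a ∈ m, 2 ≤ a)
    (heven : Even (m.sum + Multiset.card m)) :
    m.lcm ∣ Monoid.exponent (alternatingGroup α) := by
  obtain ⟨g, hg⟩ := (Equiv.Perm.exists_with_cycleType_iff α).mpr ⟨hsum, h2⟩
  have hsign : Equiv.Perm.sign g = 1 := by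
    rw [Equiv.Perm.sign_of_cycleType, hg, Even.neg_one_pow heven]
  have hmem : g ∈ alternatingGroup α := Equiv.Perm.mem_alternatingGroup.mpr hsign
  have horder : orderOf (⟨g, hmem⟩ : alternatingGroup α) = m.lcm := by
    rw [Subgroup.orderOf_mk, ← Equiv.Perm.lcm_cycleType, hg]
  rw [← horder]
  exact Monoid.order_dvd_exponent _

/-- If `n ≥ 5` is neither a power of an odd prime nor of the form `2^r + 2`, then
`A_{n-1}` and `A_n` have the same exponent. -/
theorem exponent_alternatingGroup_pred_eq (n : ℕ) (hn : 5 ≤ n)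
    (h1 : ¬ ∃ p r : ℕ, p.Prime ∧ Odd p ∧ 1 ≤ r ∧ n = p ^ r)
    (h2 : ∀ r : ℕ, n ≠ 2 ^ r + 2) :
    Monoid.exponent (alternatingGroup (Fin (n - 1))) =
      Monoid.exponent (alternatingGroup (Fin n)) := by
  apply Nat.dvd_antisymm
  · -- exp(A_{n-1}) ∣ exp(A_n)
    apply Monoid.exponent_dvd_of_forall_pow_eq_one
    intro g
    rw [← orderOf_dvd_iff_pow_eq_one, ← Subgroup.orderOf_coe,
      ← Equiv.Perm.lcm_cycleType]
    apply dvd_exponent_alternatingGroup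
    · calc (Equiv.Perm.cycleType (g : Equiv.Perm (Fin (n - 1)))).sum
          = (Equiv.Perm.support (g : Equiv.Perm (Fin (n - 1)))).card :=
            Equiv.Perm.sum_cycleType _
        _ ≤ Fintype.card (Fin (n - 1)) := Finset.card_le_univ _
        _ ≤ Fintype.card (Fin n) := by simp [Nat.sub_le]
    · exact fun a ha => Equiv.Perm.two_le_of_mem_cycleType ha
    · have hs : Equiv.Perm.sign (g : Equiv.Perm (Fin (n - 1))) = 1 :=
        Equiv.Perm.mem_alternatingGroup.mp g.2
      rw [Equiv.Perm.sign_of_cycleType] at hs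
      exact (neg_one_pow_eq_one_iff_even (by decide : (-1 : ℤˣ) ≠ 1)).mp hs
  · -- exp(A_n) ∣ exp(A_{n-1})
    apply Monoid.exponent_dvd_of_forall_pow_eq_one
    intro g
    rw [← orderOf_dvd_iff_pow_eq_one, ← Subgroup.orderOf_coe,
      Nat.dvd_iff_prime_pow_dvd_dvd]
    intro p k hp' hdvd
    have hp : p.Prime := hp'
    rcases Nat.eq_zero_or_pos k with rfl | hk
    · simpa using one_dvd _
    obtain ⟨m, hm⟩ : ∃ m, Equiv.Perm.cycleType (g : Equiv.Perm (Fin n)) = m := ⟨_, rfl⟩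
    have hm2 : ∀ a ∈ m, 2 ≤ a := fun a ha => Equiv.Perm.two_le_of_mem_cycleType (hm ▸ ha)
    have hm0 : ∀ a ∈ m, a ≠ 0 := fun a ha => by have := hm2 a ha; omega
    have hdvd' : p ^ k ∣ m.lcm := by
      rwa [← hm, Equiv.Perm.lcm_cycleType]
    rcases pow_dvd_multiset_lcm hp m hm0 hdvd' with hk0 | ⟨ℓ, hℓm, hℓd⟩
    · omega
    have hℓ0 : ℓ ≠ 0 := hm0 ℓ hℓm
    have hpkℓ : p ^ k ≤ ℓ := Nat.le_of_dvd (Nat.pos_of_ne_zero hℓ0) hℓd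
    have hsumn : m.sum ≤ n := by
      calc m.sum = (Equiv.Perm.support (g : Equiv.Perm (Fin n))).card := by
            rw [← hm, Equiv.Perm.sum_cycleType]
        _ ≤ Fintype.card (Fin n) := Finset.card_le_univ _
        _ = n := Fintype.card_fin n
    have hℓsum : ℓ ≤ m.sum := Multiset.single_le_sum (fun x _ => Nat.zero_le x) ℓ hℓm
    have heven : Even (m.sum + Multiset.card m) := by
      have hs : Equiv.Perm.sign (g : Equiv.Perm (Fin n)) = 1 :=
        Equiv.Perm.mem_alternatingGroup.mp g.2
      rw [Equiv.Perm.sign_of_cycleType, hm] at hs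
      exact (neg_one_pow_eq_one_iff_even (by decide : (-1 : ℤˣ) ≠ 1)).mp hs
    by_cases hp2 : p = 2
    · -- p = 2 : there must be another even cycle, so 2^k + 2 ≤ n, and ≠ n
      subst hp2
      have hℓeven : Even ℓ := (dvd_pow_self 2 hk.ne').trans hℓd
        |>.elim fun c hc => ⟨c, by omega⟩
      -- find another even element in m.erase ℓ
      have hcons : ℓ ::ₘ m.erase ℓ = m := Multiset.cons_erase hℓm
      obtain ⟨ℓ', hℓ'mem, hℓ'even⟩ : ∃ ℓ' ∈ m.erase ℓ, Even ℓ' := by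
        by_contra hcon
        push_neg at hcon
        have := odd_multiset_sum_add_card_even (m.erase ℓ) hcon
        rw [← hcons, Multiset.sum_cons, Multiset.card_cons] at heven
        obtain ⟨c, hc⟩ := hℓeven
        obtain ⟨d, hd⟩ := this
        obtain ⟨e, he⟩ := heven
        omega
      have hℓ'2 : 2 ≤ ℓ' := hm2 ℓ' (Multiset.mem_of_mem_erase hℓ'mem)
      have hℓ'sum : ℓ' ≤ (m.erase ℓ).sum :=
        Multiset.single_le_sum (fun x _ => Nat.zero_le x) ℓ' hℓ'mem
      have hsum2 : ℓ + 2 ≤ m.sum := by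
        rw [← hcons, Multiset.sum_cons]; omega
      have hle : 2 ^ k + 2 ≤ n := by omega
      have hne : 2 ^ k + 2 ≠ n := fun h => h2 k h.symm
      -- construct element with cycle type {2^k, 2} in A_{n-1}
      have key : Multiset.lcm {2 ^ k, 2} ∣
          Monoid.exponent (alternatingGroup (Fin (n - 1))) := by
        apply dvd_exponent_alternatingGroup
        · simp only [Multiset.insert_eq_cons, Multiset.sum_cons, Multiset.sum_singleton,
            Fintype.card_fin]
          omega
        · intro a ha
          simp only [Multiset.insert_eq_cons, Multiset.mem_cons, Multiset.mem_singleton] at ha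
          rcases ha with rfl | rfl
          · exact Nat.one_lt_two_pow_iff.mpr hk.ne'
          · exact le_refl 2
        · simp only [Multiset.insert_eq_cons, Multiset.sum_cons, Multiset.sum_singleton,
            Multiset.card_cons, Multiset.card_singleton]
          obtain ⟨c, hc⟩ : ∃ c, 2 ^ k = 2 * c := dvd_pow_self 2 hk.ne'
          exact ⟨c + 2, by omega⟩
      exact dvd_trans (Multiset.dvd_lcm (by simp)) key
    · -- p odd
      have hpodd : Odd p := hp.odd_of_ne_two hp2
      have hne : p ^ k ≠ n := by
        intro h
        exact h1 ⟨p, k, hp, hpodd, hk, h.symm⟩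
      have hle : p ^ k ≤ n - 1 := by
        have : p ^ k ≤ n := le_trans hpkℓ (le_trans hℓsum hsumn)
        omega
      have key : Multiset.lcm {p ^ k} ∣
          Monoid.exponent (alternatingGroup (Fin (n - 1))) := by
        apply dvd_exponent_alternatingGroup
        · simpa using hle
        · intro a ha
          simp only [Multiset.mem_singleton] at ha
          subst ha
          calc 2 ≤ p := hp.two_le
            _ = p ^ 1 := (pow_one p).symm
            _ ≤ p ^ k := Nat.pow_le_pow_right hp.pos hk
        · simp only [Multiset.sum_singleton, Multiset.card_singleton]
          obtain ⟨c, hc⟩ := hpodd.pow (n := k)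
          exact ⟨c + 1, by omega⟩
      exact dvd_trans (Multiset.dvd_lcm (by simp)) key
end

section
/- Let n ≥ 5 with n = 2^r + 2 for some natural number r, and suppose n − 1 is not a power of an odd prime. Fix two distinct points a, b of {1, …, n} and let H = {σ ∈ A_n : σ maps the set {a, b} onto itself} be the setwise stabilizer of {a, b} in A_n. Then H is a proper subgroup of A_n and exp(H) = exp(A_n). -/
open Pointwise

section Aux

open Equiv Equiv.Perm

lemma orderOf_subgroup_coe' {G : Type*} [Group G] {H : Subgroup G} (x : H) :
    orderOf x = orderOf (x : G) :=
  (orderOf_injective H.subtype (Subgroup.subtype_injective _) x).symm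

lemma altPairStab_smul_pair {n : ℕ} (g : alternatingGroup (Fin n)) (a b : Fin n) :
    g • ({a, b} : Set (Fin n)) = {(g : Perm (Fin n)) a, (g : Perm (Fin n)) b} := by
  show (g : Perm (Fin n)) • ({a, b} : Set (Fin n)) = _
  rw [Set.smul_set_insert, Set.smul_set_singleton]
  rfl

lemma pair_stab_dvd_exponent {n : ℕ} (a b : Fin n) (hab : a ≠ b) {m : ℕ}
    (hm : 1 ≤ m) (hmn : m ≤ n - 2) :
    m ∣ Monoid.exponent
      (MulAction.stabilizer (alternatingGroup (Fin n)) ({a, b} : Set (Fin n))) := by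
  rcases eq_or_lt_of_le hm with h1 | h2
  · rw [← h1]; exact one_dvd _
  -- 2 ≤ m; build a cycle of length m avoiding a and b
  have hcard2 : ({a, b} : Finset (Fin n)).card = 2 := by
    rw [Finset.card_insert_of_notMem (by simpa using hab), Finset.card_singleton]
  have hcompl : m ≤ (({a, b} : Finset (Fin n))ᶜ).card := by
    rw [Finset.card_compl, Fintype.card_fin, hcard2]; exact hmn
  obtain ⟨t, hts, htc⟩ := Finset.exists_subset_card_eq hcompl
  set l := t.toList with hl
  have hnd : l.Nodup := t.nodup_toList
  have hlen : l.length = m := by rw [hl, Finset.length_toList, htc]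
  have hlen2 : 2 ≤ l.length := by omega
  have hcyc := List.isCycle_formPerm hnd hlen2
  have hsupp : (List.formPerm l).support = t := by
    rw [List.support_formPerm_of_nodup l hnd ?_]
    · rw [hl, Finset.toList_toFinset]
    · intro x hx
      apply_fun List.length at hx
      simp only [List.length_singleton, hlen] at hx
      omega
  have horder : orderOf (List.formPerm l) = m := by
    rw [hcyc.orderOf, hsupp, htc]
  have ha : a ∉ t := fun haT => by simpa using Finset.mem_compl.mp (hts haT)
  have hb : b ∉ t := fun hbT => by
    have := Finset.mem_compl.mp (hts hbT)
    simp at this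
  have hfa : (List.formPerm l) a = a := by
    rw [← Equiv.Perm.notMem_support, hsupp]; exact ha
  have hfb : (List.formPerm l) b = b := by
    rw [← Equiv.Perm.notMem_support, hsupp]; exact hb
  have hsign : Equiv.Perm.sign (List.formPerm l) = -(-1) ^ m := by
    rw [hcyc.sign, hsupp, htc]
  rcases Nat.even_or_odd m with hme | hmo
  · -- m even : use cycle * swap a b
    set σ : Perm (Fin n) := List.formPerm l * Equiv.swap a b with hσ
    have hdisj : (List.formPerm l).Disjoint (Equiv.swap a b) := by
      intro x
      rcases eq_or_ne x a with rfl | hxa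
      · left; exact hfa
      rcases eq_or_ne x b with rfl | hxb
      · left; exact hfb
      · right; exact Equiv.swap_apply_of_ne_of_ne hxa hxb
    have hsσ : Equiv.Perm.sign σ = 1 := by
      rw [hσ, map_mul, hsign, Equiv.Perm.sign_swap hab, hme.neg_one_pow]
      norm_num
    have hswap2 : orderOf (Equiv.swap a b) = 2 := by
      apply orderOf_eq_prime
      · rw [sq, Equiv.swap_mul_self]
      · rw [Ne, Equiv.swap_eq_one_iff]
        exact hab
    have hoσ : orderOf σ = m := by
      rw [hσ, hdisj.orderOf, horder, hswap2]
      exact Nat.dvd_antisymm (Nat.lcm_dvd dvd_rfl (even_iff_two_dvd.mp hme)) (Nat.dvd_lcm_left _ _)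
    set g : alternatingGroup (Fin n) := ⟨σ, Equiv.Perm.mem_alternatingGroup.mpr hsσ⟩ with hg
    have hstab : g ∈ MulAction.stabilizer (alternatingGroup (Fin n)) ({a, b} : Set (Fin n)) := by
      rw [MulAction.mem_stabilizer_iff, altPairStab_smul_pair]
      have h1 : (g : Perm (Fin n)) a = b := by
        show σ a = b
        rw [hσ, Equiv.Perm.mul_apply, Equiv.swap_apply_left, hfb]
      have h2 : (g : Perm (Fin n)) b = a := by
        show σ b = a
        rw [hσ, Equiv.Perm.mul_apply, Equiv.swap_apply_right, hfa]
      rw [h1, h2, Set.pair_comm]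
    set x : MulAction.stabilizer (alternatingGroup (Fin n)) ({a, b} : Set (Fin n)) :=
      ⟨g, hstab⟩ with hx
    have hox : orderOf x = m := by
      rw [orderOf_subgroup_coe' x, orderOf_subgroup_coe' g, hoσ]
    rw [← hox]
    exact Monoid.order_dvd_exponent x
  · -- m odd : the cycle itself is even
    set σ : Perm (Fin n) := List.formPerm l with hσ
    have hsσ : Equiv.Perm.sign σ = 1 := by
      rw [hσ, hsign, hmo.neg_one_pow]; norm_num
    set g : alternatingGroup (Fin n) := ⟨σ, Equiv.Perm.mem_alternatingGroup.mpr hsσ⟩ with hg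
    have hstab : g ∈ MulAction.stabilizer (alternatingGroup (Fin n)) ({a, b} : Set (Fin n)) := by
      rw [MulAction.mem_stabilizer_iff, altPairStab_smul_pair]
      show ({σ a, σ b} : Set (Fin n)) = {a, b}
      rw [hσ, hfa, hfb]
    set x : MulAction.stabilizer (alternatingGroup (Fin n)) ({a, b} : Set (Fin n)) :=
      ⟨g, hstab⟩ with hx
    have hox : orderOf x = m := by
      rw [orderOf_subgroup_coe' x, orderOf_subgroup_coe' g]
      exact horder
    rw [← hox]
    exact Monoid.order_dvd_exponent x

end Aux

/-- If `n = 2^r + 2 ≥ 5` and `n - 1` is not a power of an odd prime, then the setwise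
stabilizer in `A_n` of a two-element set `{a, b}` is a proper subgroup of `A_n` with
the same exponent as `A_n`. -/
theorem alternatingGroup_stabilizer_pair_proper_and_same_exponent
    (n : ℕ) (hn : 5 ≤ n) (r : ℕ) (hnr : n = 2 ^ r + 2)
    (h : ¬ ∃ p s : ℕ, p.Prime ∧ Odd p ∧ 1 ≤ s ∧ n - 1 = p ^ s)
    (a b : Fin n) (hab : a ≠ b) :
    MulAction.stabilizer (alternatingGroup (Fin n)) ({a, b} : Set (Fin n)) ≠ ⊤ ∧
      Monoid.exponent
          (MulAction.stabilizer (alternatingGroup (Fin n)) ({a, b} : Set (Fin n))) =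
        Monoid.exponent (alternatingGroup (Fin n)) := by
  have hr2 : 2 ≤ r := by
    by_contra hr
    interval_cases r <;> omega
  have hpowsplit : 2 ^ r = 2 * 2 ^ (r - 1) := by
    rw [← pow_succ']
    congr 1
    omega
  have hneven : Even n := by
    rw [Nat.even_iff]
    omega
  constructor
  · -- properness: find an even permutation moving {a, b}
    intro htop
    have hc : (({a, b} : Finset (Fin n))ᶜ).Nonempty := by
      rw [← Finset.card_pos, Finset.card_compl, Fintype.card_fin]
      have h1 := Finset.card_insert_le a ({b} : Finset (Fin n))
      have h2 : ({b} : Finset (Fin n)).card = 1 := Finset.card_singleton b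
      omega
    obtain ⟨c, hcmem⟩ := hc
    have hca : c ≠ a := by intro h'; subst h'; simp at hcmem
    have hcb : c ≠ b := by intro h'; subst h'; simp at hcmem
    have hd : (({a, b, c} : Finset (Fin n))ᶜ).Nonempty := by
      rw [← Finset.card_pos, Finset.card_compl, Fintype.card_fin]
      have h1 := Finset.card_insert_le a ({b, c} : Finset (Fin n))
      have h2 := Finset.card_insert_le b ({c} : Finset (Fin n))
      have h3 : ({c} : Finset (Fin n)).card = 1 := Finset.card_singleton c
      omega
    obtain ⟨d, hdmem⟩ := hd
    have hda : d ≠ a := by intro h'; subst h'; simp at hdmem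
    have hdb : d ≠ b := by intro h'; subst h'; simp at hdmem
    set σ : Equiv.Perm (Fin n) := Equiv.swap a c * Equiv.swap b d with hσ
    have hsσ : Equiv.Perm.sign σ = 1 := by
      rw [hσ, map_mul, Equiv.Perm.sign_swap (Ne.symm hca), Equiv.Perm.sign_swap (Ne.symm hdb)]
      norm_num
    set g : alternatingGroup (Fin n) := ⟨σ, Equiv.Perm.mem_alternatingGroup.mpr hsσ⟩ with hg
    have hstab : g ∈ MulAction.stabilizer (alternatingGroup (Fin n)) ({a, b} : Set (Fin n)) := by
      rw [htop]; trivial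
    rw [MulAction.mem_stabilizer_iff, altPairStab_smul_pair] at hstab
    have hga : (g : Equiv.Perm (Fin n)) a = c := by
      show σ a = c
      rw [hσ, Equiv.Perm.mul_apply, Equiv.swap_apply_of_ne_of_ne hab (Ne.symm hda),
        Equiv.swap_apply_left]
    have : c ∈ ({a, b} : Set (Fin n)) := by
      rw [← hstab, ← hga]
      exact Set.mem_insert _ _
    rcases this with h' | h'
    · exact hca h'
    · exact hcb h'
  · -- exponents agree
    apply Nat.dvd_antisymm
    · -- exp H ∣ exp A
      rw [Monoid.exponent_dvd]
      intro x
      rw [orderOf_subgroup_coe' x]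
      exact Monoid.order_dvd_exponent _
    · -- exp A ∣ exp H
      rw [Monoid.exponent_dvd]
      intro g
      rw [orderOf_subgroup_coe' g, ← Equiv.Perm.lcm_cycleType]
      apply Multiset.lcm_dvd.mpr
      intro m hm
      have hm2 : 2 ≤ m := Equiv.Perm.two_le_of_mem_cycleType hm
      have hmn : m ≤ n := by
        calc m ≤ (Equiv.Perm.cycleType (g : Equiv.Perm (Fin n))).sum :=
              Multiset.single_le_sum (fun _ _ => Nat.zero_le _) m hm
          _ = (g : Equiv.Perm (Fin n)).support.card := Equiv.Perm.sum_cycleType _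
          _ ≤ Fintype.card (Fin n) := Finset.card_le_univ _
          _ = n := Fintype.card_fin n
      rw [Nat.dvd_iff_prime_pow_dvd_dvd]
      intro p k hp hpk
      rcases Nat.eq_zero_or_pos k with rfl | hk
      · simpa using one_dvd _
      have hpp : p.Prime := hp
      have hpkm : p ^ k ≤ n := le_trans (Nat.le_of_dvd (by omega) hpk) hmn
      have hq2 : 1 ≤ p ^ k := Nat.one_le_pow _ _ hpp.pos
      have hqle : p ^ k ≤ n - 2 := by
        rcases hpp.eq_two_or_odd' with rfl | hodd
        · -- p = 2 : 2^k ≤ 2^r = n - 2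
          have hkr : k ≤ r := by
            by_contra hkr
            push_neg at hkr
            have hle : 2 ^ (r + 1) ≤ 2 ^ k :=
              Nat.pow_le_pow_right (by norm_num) (by omega)
            rw [pow_succ] at hle
            omega
          have : (2 : ℕ) ^ k ≤ 2 ^ r := Nat.pow_le_pow_right (by norm_num) hkr
          omega
        · -- p odd
          have hqodd : Odd (p ^ k) := hodd.pow
          have hqn : p ^ k ≠ n := by
            intro he
            rw [he] at hqodd
            exact (Nat.not_odd_iff_even.mpr hneven) hqodd
          have hqn1 : p ^ k ≠ n - 1 := by
            intro he
            exact h ⟨p, k, hpp, hodd, hk, he.symm⟩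
          omega
      exact pair_stab_dvd_exponent a b hab hq2 hqle
end

section
/- Let p be an odd prime and r ≥ 1, s ≥ 2 be natural numbers with 2^r + 1 = p^s. Then r = 3, p = 3 and s = 2. -/
/-- The special case of Mihailescu's (Catalan's) theorem: if `p` is an odd prime,
`r ≥ 1`, `s ≥ 2`, and `2^r + 1 = p^s`, then `r = 3`, `p = 3`, and `s = 2`. -/
theorem catalan_special_case (p r s : ℕ) (hp : p.Prime) (hodd : Odd p)
    (hr : 1 ≤ r) (hs : 2 ≤ s) (h : 2 ^ r + 1 = p ^ s) :
    r = 3 ∧ p = 3 ∧ s = 2 := by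
  have hp3 : 3 ≤ p := by
    rcases hodd with ⟨k, hk⟩
    have := hp.two_le
    omega
  rcases Nat.even_or_odd s with hse | hso
  · -- s even : s = 2t, 2^r = (p^t - 1)(p^t + 1)
    obtain ⟨t, ht⟩ := hse
    have ht1 : 1 ≤ t := by omega
    have hpt : 3 ≤ p ^ t := le_trans hp3 (Nat.le_self_pow (by omega) p)
    obtain ⟨m, hm⟩ : ∃ m, p ^ t = m + 1 := ⟨p ^ t - 1, by omega⟩
    have hm2 : 2 ≤ m := by omega
    have hps : p ^ s = (m + 1) ^ 2 := by
      rw [ht, ← hm]; ring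
    have hsq : (m + 1) ^ 2 = m * (m + 2) + 1 := by ring
    have hfac : m * (m + 2) = 2 ^ r := by omega
    have hd1 : m ∣ 2 ^ r := ⟨m + 2, hfac.symm⟩
    have hd2 : (m + 2) ∣ 2 ^ r := Dvd.intro_left m hfac
    obtain ⟨a, ha, hma⟩ := (Nat.dvd_prime_pow Nat.prime_two).mp hd1
    obtain ⟨b, hb, hmb⟩ := (Nat.dvd_prime_pow Nat.prime_two).mp hd2
    -- m is even since p^t is odd
    have hmeven : m % 2 = 0 := by
      have : p ^ t % 2 = 1 := Nat.odd_iff.mp (hodd.pow)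
      omega
    -- a = 1
    have ha1 : a = 1 := by
      rcases a with _ | _ | a
      · simp at hma; omega
      · rfl
      · exfalso
        have h4m : 4 ∣ m := by
          rw [hma]
          have : (4 : ℕ) = 2 ^ 2 := by norm_num
          rw [this]
          exact pow_dvd_pow 2 (by omega)
        have hb3 : 3 ≤ b := by
          have : 2 ^ (a + 2) ≥ 4 := by
            have := Nat.one_le_two_pow (n := a)
            simp [pow_succ]; omega
          have h6 : 6 ≤ 2 ^ b := by omega
          by_contra hc
          interval_cases b <;> omega
        have h4b : 4 ∣ 2 ^ b := by
          have : (4 : ℕ) = 2 ^ 2 := by norm_num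
          rw [this]
          exact pow_dvd_pow 2 (by omega)
        omega
    have hm2' : m = 2 := by rw [ha1] at hma; simpa using hma
    have hpt3 : p ^ t = 3 := by omega
    have ht1' : t = 1 := by
      by_contra hc
      have : 2 ≤ t := by omega
      have : p ^ 2 ≤ p ^ t := Nat.pow_le_pow_right (by omega) this
      nlinarith
    have hp3' : p = 3 := by rw [ht1'] at hpt3; simpa using hpt3
    have hs2 : s = 2 := by omega
    have h8 : 2 ^ r = 8 := by
      rw [hs2, hp3'] at h; omega
    have hr3 : r = 3 := by
      have : (2 : ℕ) ^ r = 2 ^ 3 := by omega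
      exact Nat.pow_right_injective (by norm_num) this
    exact ⟨hr3, hp3', hs2⟩
  · -- s odd : the geometric sum ∑ p^i is an odd divisor > 1 of 2^r
    exfalso
    set S : ℕ := ∑ i ∈ Finset.range s, p ^ i with hS
    have hZ : (S : ℤ) * ((p : ℤ) - 1) = 2 ^ r := by
      have hcast : (2 : ℤ) ^ r + 1 = (p : ℤ) ^ s := by exact_mod_cast h
      have := geom_sum_mul (p : ℤ) s
      push_cast [hS]
      omega
    have hSdvd : S ∣ 2 ^ r := by
      have : (S : ℤ) ∣ ((2 ^ r : ℕ) : ℤ) := ⟨(p : ℤ) - 1, by push_cast; omega⟩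
      exact_mod_cast this
    have hSodd : S % 2 = 1 := by
      have hp2 : p % 2 = 1 := Nat.odd_iff.mp hodd
      have : S % 2 = (∑ i ∈ Finset.range s, p ^ i % 2) % 2 := Finset.sum_nat_mod _ _ _
      have hterm : ∀ i, p ^ i % 2 = 1 := by
        intro i
        simp [Nat.pow_mod, hp2]
      simp only [hterm] at this
      simp at this
      rw [this]
      exact Nat.odd_iff.mp hso
    have hS1 : S = 1 := by
      have hcop : Nat.Coprime S 2 := by
        exact Nat.coprime_two_right.mpr (Nat.odd_iff.mpr hSodd)
      exact (hcop.pow_right r).eq_one_of_dvd hSdvd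
    have hSge : p ≤ S := by
      have h1mem : 1 ∈ Finset.range s := Finset.mem_range.mpr (by omega)
      have := Finset.single_le_sum (f := fun i => p ^ i)
        (fun i _ => Nat.zero_le _) h1mem
      simpa using this
    omega
end

section
/- Let p be an odd prime and q a prime power with p not dividing q. Let e = ord_p(q) be the multiplicative order of q modulo p, let r be such that p^r exactly divides q^e − 1, and let v, n be natural numbers with e·p^v ≤ n < e·p^(v+1). Then exp_p(GL_n(F_q)) = p^(r+v). -/
/-!
Lower bound: a field extension `K/F` of degree `m = e·p^v ≤ n` acts `F`-linearly on
`K × F^(n-m) ≅ F^n`, which embeds the cyclic group `Kˣ` of order `q^m - 1` into `GL_n(F)`.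
Upper bound: if `g ∈ GL_n(F)` has order `p^(k+1)`, its minimal polynomial divides the separable
polynomial `X^(p^(k+1)) - 1` but not `X^(p^k) - 1`, so some irreducible factor `π` has a root of
order `p^(k+1)` in `F[X]/(π)`, whence `p^(k+1) ∣ q^d - 1` with `d = deg π ≤ n`.
Both bounds then come from lifting the exponent: for `d ≠ 0`, `p^(r+w) ∣ q^d - 1` iff `e·p^w ∣ d`.
-/

open Module Polynomial

theorem ZMod.orderOf_natCast_ne_zero {p q : ℕ} [hp : Fact p.Prime] (hpq : ¬ p ∣ q) :
    orderOf (q : ZMod p) ≠ 0 := by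
  have hq : (q : ZMod p) ≠ 0 := by rwa [Ne, ZMod.natCast_eq_zero_iff]
  exact ne_zero_of_dvd_ne_zero (Nat.sub_ne_zero_of_lt hp.out.one_lt)
    (ZMod.orderOf_dvd_card_sub_one hq)

namespace Nat

theorem dvd_pow_sub_one_iff_orderOf_dvd {p q : ℕ} (hq : q ≠ 0) (d : ℕ) :
    p ∣ q ^ d - 1 ↔ orderOf (q : ZMod p) ∣ d := by
  rw [orderOf_dvd_iff_pow_eq_one, ← modEq_iff_dvd' (one_le_pow _ _ (pos_of_ne_zero hq)),
    ← ZMod.natCast_eq_natCast_iff, cast_pow, cast_one, eq_comm]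

variable {p q e r : ℕ} [hp : Fact p.Prime]

theorem pow_add_dvd_pow_sub_one_iff (hodd : Odd p) (hq : 1 < q) (hpq : ¬ p ∣ q)
    (he : orderOf (q : ZMod p) = e) (hr : padicValNat p (q ^ e - 1) = r) {d : ℕ} (hd : d ≠ 0)
    (w : ℕ) : p ^ (r + w) ∣ q ^ d - 1 ↔ e * p ^ w ∣ d := by
  have he0 : e ≠ 0 := he ▸ ZMod.orderOf_natCast_ne_zero hpq
  have hsub : ∀ {m}, m ≠ 0 → q ^ m - 1 ≠ 0 := fun hm ↦
    Nat.sub_ne_zero_of_lt (Nat.one_lt_pow hm hq)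
  have hdvd : ∀ m, p ∣ q ^ m - 1 ↔ e ∣ m := fun m ↦
    he ▸ dvd_pow_sub_one_iff_orderOf_dvd (by omega) m
  have hr0 : r ≠ 0 := hr ▸ Nat.one_le_iff_ne_zero.mp
    (one_le_padicValNat_of_dvd (hsub he0) ((hdvd e).mpr dvd_rfl))
  by_cases hed : e ∣ d
  · obtain ⟨s, rfl⟩ := hed
    have hs : s ≠ 0 := right_ne_zero_of_mul hd
    have hlte : padicValNat p (q ^ (e * s) - 1) = r + padicValNat p s := by
      rw [pow_mul, ← hr]
      simpa using padicValNat.pow_sub_pow hodd (Nat.one_lt_pow he0 hq) ((hdvd e).mpr dvd_rfl)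
        (fun h ↦ hpq (hp.out.dvd_of_dvd_pow h)) hs
    rw [padicValNat_dvd_iff_le (hsub hd), hlte, Nat.mul_dvd_mul_iff_left (Nat.pos_of_ne_zero he0),
      padicValNat_dvd_iff_le hs]
    omega
  · exact iff_of_false (fun h ↦ hed ((hdvd d).mp ((dvd_pow_self p (by omega)).trans h)))
      (fun h ↦ hed ((dvd_mul_right e _).trans h))

end Nat

section GeneralLinearGroup

variable {F : Type*} [Field F]

theorem exponent_units_dvd_exponent_generalLinearGroup {K : Type*} [Field K] [Algebra F K]
    [FiniteDimensional F K] {n : ℕ} (hn : finrank F K ≤ n) :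
    Monoid.exponent Kˣ ∣ Monoid.exponent (GL (Fin n) F) := by
  let V := K × (Fin (n - finrank F K) → F)
  let toEnd : K →* Module.End F V :=
    (LinearMap.prodMapRingHom F K (Fin (n - finrank F K) → F)).toMonoidHom.comp
      ((MonoidHom.inl _ _).comp (Algebra.lmul F K : K →* Module.End F K))
  have htoEnd : Function.Injective toEnd := fun a b hab ↦ by
    have h := congr(($hab (1, 0)).1)
    change a * 1 = b * 1 at h
    simpa using h
  have hV : finrank F V = n := by simp [V]; omega
  let b := Module.finBasisOfFinrankEq F V hV
  rw [← Monoid.exponent_eq_of_mulEquiv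
    (Units.mapEquiv (LinearMap.toMatrixAlgEquiv b).toMulEquiv)]
  exact Monoid.exponent_dvd_of_monoidHom _ (Units.map_injective htoEnd)

theorem natCard_pow_sub_one_dvd_exponent_generalLinearGroup [Finite F] {m n : ℕ} (hm : m ≠ 0)
    (hmn : m ≤ n) : Nat.card F ^ m - 1 ∣ Monoid.exponent (GL (Fin n) F) := by
  have : Fact (ringChar F).Prime := ⟨CharP.char_is_prime F _⟩
  have : NeZero m := ⟨hm⟩
  let K := FiniteField.Extension F (ringChar F) m
  have hexp : Monoid.exponent Kˣ = Nat.card F ^ m - 1 := by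
    rw [IsCyclic.exponent_eq_card, Nat.card_units, FiniteField.natCard_extension]
  exact hexp ▸ exponent_units_dvd_exponent_generalLinearGroup
    ((FiniteField.finrank_extension F (ringChar F) m).trans_le hmn)

end GeneralLinearGroup

theorem Squarefree.exists_irreducible_dvd_not_dvd {α : Type*} [CommMonoidWithZero α]
    [Nontrivial α] [GCDMonoid α] [WfDvdMonoid α] {a b : α} (ha : Squarefree a) (hab : ¬ a ∣ b) :
    ∃ π, Irreducible π ∧ π ∣ a ∧ ¬ π ∣ b := by
  obtain ⟨c, hc⟩ := gcd_dvd_left a b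
  have hc0 : c ≠ 0 := by
    rintro rfl
    exact ha.ne_zero (by simpa using hc)
  have hcu : ¬ IsUnit c := fun hu ↦
    hab ((hu.dvd_mul_right.mp (hc ▸ dvd_rfl)).trans (gcd_dvd_right a b))
  obtain ⟨π, hπ, hπc⟩ := WfDvdMonoid.exists_irreducible_factor hcu hc0
  have hπa : π ∣ a := hπc.trans (Dvd.intro_left _ hc.symm)
  refine ⟨π, hπ, hπa, fun hπb ↦ hπ.not_isUnit (ha π ?_)⟩
  rw [hc]
  exact mul_dvd_mul (dvd_gcd hπa hπb) hπc

theorem FiniteField.prime_pow_succ_dvd_natCard_sub_one {L : Type*} [Field L] [Finite L]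
    {p k : ℕ} [Fact p.Prime] {x : L} (h1 : x ^ p ^ (k + 1) = 1) (h2 : x ^ p ^ k ≠ 1) :
    p ^ (k + 1) ∣ Nat.card L - 1 := by
  have := Fintype.ofFinite L
  have hx : x ≠ 0 := fun h ↦ by simp [h, (Fact.out : p.Prime).ne_zero] at h1
  rw [← orderOf_eq_prime_pow h2 h1, Nat.card_eq_fintype_card]
  exact orderOf_dvd_of_pow_eq_one (FiniteField.pow_card_sub_one_eq_one x hx)

theorem Polynomial.prime_pow_succ_dvd_natCard_pow_natDegree_sub_one {F : Type*} [Field F]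
    [Finite F] {p k : ℕ} [Fact p.Prime] {π : F[X]} (hπ : Irreducible π)
    (h1 : π ∣ X ^ p ^ (k + 1) - 1) (h2 : ¬ π ∣ X ^ p ^ k - 1) :
    p ^ (k + 1) ∣ Nat.card F ^ π.natDegree - 1 := by
  have := Fact.mk hπ
  have hroot : ∀ j, AdjoinRoot.root π ^ j = 1 ↔ π ∣ X ^ j - 1 := fun j ↦ by
    rw [← AdjoinRoot.mk_eq_zero, map_sub, map_pow, AdjoinRoot.mk_X, map_one, sub_eq_zero]
  have : Module.Finite F (AdjoinRoot π) := (AdjoinRoot.powerBasis hπ.ne_zero).finite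
  have : Finite (AdjoinRoot π) := Module.finite_of_finite F
  rw [← AdjoinRoot.powerBasis_dim hπ.ne_zero, ← (AdjoinRoot.powerBasis hπ.ne_zero).finrank,
    ← Module.natCard_eq_pow_finrank]
  exact FiniteField.prime_pow_succ_dvd_natCard_sub_one ((hroot _).mpr h1) (mt (hroot _).mp h2)

theorem Matrix.exists_prime_pow_succ_dvd_natCard_pow_sub_one {F ι : Type*} [Field F] [Finite F]
    [Fintype ι] [DecidableEq ι] {p k : ℕ} [Fact p.Prime] (hpF : (p : F) ≠ 0)
    {M : Matrix ι ι F} (h1 : M ^ p ^ (k + 1) = 1) (h2 : M ^ p ^ k ≠ 1) :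
    ∃ d, 0 < d ∧ d ≤ Fintype.card ι ∧ p ^ (k + 1) ∣ Nat.card F ^ d - 1 := by
  classical
  have hμ : ∀ j, minpoly F M ∣ X ^ j - 1 ↔ M ^ j = 1 := fun j ↦ by
    rw [minpoly.dvd_iff, map_sub, map_pow, aeval_X, map_one, sub_eq_zero]
  have hsep : (X ^ p ^ (k + 1) - 1 : F[X]).Separable := by
    simpa using separable_X_pow_sub_C (1 : F) (by simpa using hpF) one_ne_zero
  obtain ⟨π, hπ, hπμ, hπh⟩ :=
    (hsep.of_dvd ((hμ _).mpr h1)).squarefree.exists_irreducible_dvd_not_dvd (mt (hμ _).mp h2)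
  refine ⟨π.natDegree, hπ.natDegree_pos, ?_,
    prime_pow_succ_dvd_natCard_pow_natDegree_sub_one hπ (hπμ.trans ((hμ _).mpr h1)) hπh⟩
  calc π.natDegree ≤ (minpoly F M).natDegree :=
        natDegree_le_of_dvd hπμ (minpoly.ne_zero (.of_finite F M))
    _ ≤ M.charpoly.natDegree :=
        natDegree_le_of_dvd (Matrix.minpoly_dvd_charpoly M) (Matrix.charpoly_monic M).ne_zero
    _ = Fintype.card ι := Matrix.charpoly_natDegree_eq_dim M

theorem Monoid.exists_pow_pow_succ_eq_one_and_pow_pow_ne_one {G : Type*} [Monoid G] {p k : ℕ}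
    (hp : 1 < p) (hG : exponent G ≠ 0) (h : p ^ (k + 1) ∣ exponent G) :
    ∃ g : G, g ^ p ^ (k + 1) = 1 ∧ g ^ p ^ k ≠ 1 := by
  obtain ⟨m, hm⟩ := h
  by_contra! H
  have hdvd : exponent G ∣ p ^ k * m := exponent_dvd_of_forall_pow_eq_one fun g ↦ by
    rw [pow_mul', H (g ^ m) (by rw [← pow_mul', ← hm, pow_exponent_eq_one])]
  rw [hm, Nat.mul_dvd_mul_iff_right (Nat.pos_of_ne_zero (right_ne_zero_of_mul (hm ▸ hG))),
    Nat.pow_dvd_pow_iff_le_right hp] at hdvd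
  omega

theorem exponent_p_part_generalLinearGroup_general (p q : ℕ) (hp : p.Prime) (hodd : Odd p)
    (hpq : ¬ p ∣ q)
    (F : Type) [Field F] [Fintype F] (hF : Fintype.card F = q)
    (e r v n : ℕ) (he : orderOf (q : ZMod p) = e)
    (hr : p ^ r ∣ q ^ e - 1 ∧ ¬ p ^ (r + 1) ∣ q ^ e - 1)
    (hn1 : e * p ^ v ≤ n) (hn2 : n < e * p ^ (v + 1)) :
    p ^ (r + v) ∣ Monoid.exponent (Matrix.GeneralLinearGroup (Fin n) F) ∧
      ¬ p ^ (r + v + 1) ∣ Monoid.exponent (Matrix.GeneralLinearGroup (Fin n) F) := by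
  have := Fact.mk hp
  have hq : Nat.card F = q := Nat.card_eq_fintype_card.trans hF
  have hq1 : 1 < q := hF ▸ Fintype.one_lt_card
  have he0 : e ≠ 0 := he ▸ ZMod.orderOf_natCast_ne_zero hpq
  have hr' : padicValNat p (q ^ e - 1) = r := by
    have hne : q ^ e - 1 ≠ 0 := Nat.sub_ne_zero_of_lt (Nat.one_lt_pow he0 hq1)
    exact_mod_cast (padicValNat_eq_emultiplicity hne).trans (emultiplicity_eq_coe.mpr hr)
  have hlte {d : ℕ} (hd : d ≠ 0) (w : ℕ) :=
    Nat.pow_add_dvd_pow_sub_one_iff hodd hq1 hpq he hr' hd w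
  constructor
  · have hm : e * p ^ v ≠ 0 := mul_ne_zero he0 (pow_ne_zero _ hp.ne_zero)
    exact ((hlte hm v).mpr dvd_rfl).trans
      (hq ▸ natCard_pow_sub_one_dvd_exponent_generalLinearGroup hm hn1)
  · intro hcon
    obtain ⟨g, hg1, hg2⟩ := Monoid.exists_pow_pow_succ_eq_one_and_pow_pow_ne_one hp.one_lt
      Monoid.exponent_ne_zero_of_finite hcon
    have hpF : (p : F) ≠ 0 := fun h ↦ (CharP.char_is_prime F (ringChar F)).ne_one <|
      Nat.eq_one_of_dvd_coprimes ((Nat.Prime.coprime_iff_not_dvd hp).mpr hpq) (ringChar.dvd h)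
        (ringChar.dvd (hF ▸ FiniteField.cast_card_eq_zero F))
    obtain ⟨d, hd0, hdn, hd⟩ := Matrix.exists_prime_pow_succ_dvd_natCard_pow_sub_one hpF
      (M := (g : Matrix (Fin n) (Fin n) F))
      (by rw [← Units.val_pow_eq_pow_val, hg1, Units.val_one])
      (by rwa [← Units.val_pow_eq_pow_val, Ne, Units.val_eq_one])
    rw [Fintype.card_fin] at hdn
    rw [hq, add_assoc, hlte hd0.ne'] at hd
    have := Nat.le_of_dvd hd0 hd
    omega

/-- Let `p` be an odd prime not dividing the prime power `q`, let `e` be the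
multiplicative order of `q` mod `p`, let `p^r` exactly divide `q^e - 1`, and let
`e·p^v ≤ n < e·p^(v+1)`. Then the `p`-part of the exponent of `GL_n(F_q)` is
`p^(r+v)`. -/
theorem exponent_p_part_generalLinearGroup (p q : ℕ) (hp : p.Prime) (hodd : Odd p)
    (hq : IsPrimePow q) (hpq : ¬ p ∣ q)
    (F : Type) [Field F] [Fintype F] (hF : Fintype.card F = q)
    (e r v n : ℕ) (he : orderOf (q : ZMod p) = e)
    (hr : p ^ r ∣ q ^ e - 1 ∧ ¬ p ^ (r + 1) ∣ q ^ e - 1)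
    (hn1 : e * p ^ v ≤ n) (hn2 : n < e * p ^ (v + 1)) :
    p ^ (r + v) ∣ Monoid.exponent (Matrix.GeneralLinearGroup (Fin n) F) ∧
      ¬ p ^ (r + v + 1) ∣ Monoid.exponent (Matrix.GeneralLinearGroup (Fin n) F) :=
  exponent_p_part_generalLinearGroup_general p q hp hodd hpq F hF e r v n he hr hn1 hn2
end

section
/- Let p be a prime, q = p^k a power of p, and m ≥ 1. Let a be the least natural number with p^a > 2m − 1. Then exp_p(Sp_{2m}(F_q)) = p^a. -/
/-!
A `p`-element `g` of `GL_{2m}(F)` is unipotent: `(g - 1) ^ p ^ t = g ^ p ^ t - 1 = 0`, hence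
`(g - 1) ^ (2 * m) = 0`, and as `2 * m ≤ p ^ a` also `g ^ p ^ a = 1 + (g - 1) ^ p ^ a = 1`.
Conversely, for the nilpotent Jordan block `N` of size `m` and `D = (1 + Nᵀ)⁻¹`, the block matrix
`g = [[1 + N, D], [0, D]]` is symplectic and `g - 1` has nilpotency index exactly `2 * m`: the
top-right block of `(g - 1) ^ (2 * m - 1)` is `± N ^ (m - 1) * Nᵀ ^ (m - 1) ≠ 0`. Since
`p ^ (a - 1) ≤ 2 * m - 1 < p ^ a`, this `g` has order `p ^ a`.
-/

open Matrix Finset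

section CharP

variable {A : Type*} [Ring A] {p : ℕ} [Fact p.Prime] [CharP A p]

theorem one_add_pow_char_pow (x : A) (n : ℕ) : (1 + x) ^ p ^ n = 1 + x ^ p ^ n := by
  rw [add_pow_char_pow_of_commute p n (Commute.one_left x), one_pow]

theorem sub_one_pow_char_pow_eq_zero_iff {x : A} {n : ℕ} :
    (x - 1) ^ p ^ n = 0 ↔ x ^ p ^ n = 1 := by
  rw [sub_pow_char_pow_of_commute p n (Commute.one_right x), one_pow, sub_eq_zero]

theorem orderOf_one_add_eq_prime_pow {x : A} {k n : ℕ} (hk : x ^ k ≠ 0) (hk' : x ^ (k + 1) = 0)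
    (hlo : p ^ n ≤ k) (hhi : k < p ^ (n + 1)) : orderOf (1 + x) = p ^ (n + 1) := by
  refine orderOf_eq_prime_pow ?_ ?_
  · rw [one_add_pow_char_pow, add_eq_left]
    exact fun h ↦ hk (pow_eq_zero_of_le hlo h)
  · rw [one_add_pow_char_pow, pow_eq_zero_of_le hhi hk', add_zero]

end CharP

theorem Monoid.factorization_exponent_le_of_pow_prime_pow_eq_one {G : Type*} [Monoid G]
    {p a : ℕ} (hp : p.Prime) (h : ∀ g : G, ∀ t, g ^ p ^ t = 1 → g ^ p ^ a = 1) :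
    (Monoid.exponent G).factorization p ≤ a := by
  obtain ⟨g, hg⟩ := hp.exists_orderOf_eq_pow_factorization_exponent G
  have : orderOf g ∣ p ^ a := orderOf_dvd_of_pow_eq_one (h g _ (hg ▸ pow_orderOf_eq_one g))
  rwa [hg, Nat.pow_dvd_pow_iff_le_right hp.one_lt] at this

namespace Matrix

section Nilpotent

variable {ι R : Type*} [Fintype ι] [DecidableEq ι] [CommRing R] [IsDomain R]

theorem pow_card_eq_zero_of_isNilpotent {M : Matrix ι ι R} (hM : IsNilpotent M) :
    M ^ Fintype.card ι = 0 := by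
  have hchar : M.charpoly = Polynomial.X ^ Fintype.card ι :=
    sub_eq_zero.mp (isNilpotent_charpoly_sub_pow_of_isNilpotent hM).eq_zero
  simpa [hchar] using aeval_self_charpoly M

theorem pow_char_pow_eq_one_of_card_le [Nonempty ι] {p : ℕ} [Fact p.Prime] [CharP R p]
    {M : Matrix ι ι R} {t a : ℕ} (hM : M ^ p ^ t = 1) (ha : Fintype.card ι ≤ p ^ a) :
    M ^ p ^ a = 1 := by
  have hnil : IsNilpotent (M - 1) := ⟨_, sub_one_pow_char_pow_eq_zero_iff.mpr hM⟩
  exact sub_one_pow_char_pow_eq_zero_iff.mp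
    (pow_eq_zero_of_le ha (pow_card_eq_zero_of_isNilpotent hnil))

end Nilpotent

def nilpotentJordanBlock (R : Type*) [Zero R] [One R] (n : ℕ) : Matrix (Fin n) (Fin n) R :=
  of fun i j ↦ if (j : ℕ) = i + 1 then 1 else 0

section JordanBlock

variable {R : Type*} [Semiring R]

theorem nilpotentJordanBlock_pow (n s : ℕ) :
    nilpotentJordanBlock R n ^ s = of fun i j : Fin n ↦ if (j : ℕ) = i + s then 1 else 0 := by
  induction s with
  | zero => ext i j; simp [one_apply, Fin.ext_iff, eq_comm]
  | succ s ih =>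
    ext i j
    rw [pow_succ, ih, mul_apply]
    by_cases hs : (i : ℕ) + s < n
    · rw [sum_eq_single ⟨i + s, hs⟩]
      · simp [nilpotentJordanBlock, add_assoc]
      · intro l _ hl
        simp only [ne_eq, Fin.ext_iff] at hl
        simp [hl]
      · simp
    · rw [of_apply, if_neg (by omega)]
      exact sum_eq_zero fun l _ ↦ by rw [of_apply, if_neg (by omega), zero_mul]

theorem nilpotentJordanBlock_pow_self (n : ℕ) : nilpotentJordanBlock R n ^ n = 0 := by
  ext i j
  rw [nilpotentJordanBlock_pow, of_apply, zero_apply, if_neg (by omega)]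

theorem nilpotentJordanBlock_succ_pow (n : ℕ) :
    nilpotentJordanBlock R (n + 1) ^ n = single 0 (Fin.last n) 1 := by
  ext i j
  rw [nilpotentJordanBlock_pow, of_apply, single_apply]
  simp only [Fin.ext_iff, Fin.val_zero, Fin.val_last]
  congr 1
  exact propext (by omega)

end JordanBlock

theorem fromBlocks_zero₂₁_pow_succ {m n R : Type*} [Fintype m] [Fintype n] [DecidableEq m]
    [DecidableEq n] [Semiring R] (A : Matrix m m R) (B : Matrix m n R) (D : Matrix n n R)
    (s : ℕ) : fromBlocks A B 0 D ^ (s + 1) =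
      fromBlocks (A ^ (s + 1)) (∑ i ∈ range (s + 1), A ^ i * B * D ^ (s - i)) 0 (D ^ (s + 1)) := by
  induction s with
  | zero => simp
  | succ s ih =>
    rw [pow_succ', ih, fromBlocks_multiply, sum_range_succ' _ (s + 1), Matrix.mul_sum]
    simp only [Matrix.mul_zero, Matrix.zero_mul, add_zero, ← Matrix.mul_assoc,
      ← pow_succ', pow_zero, Matrix.one_mul, Nat.sub_zero, Nat.add_sub_add_right, add_comm]

variable {ι R : Type*} [Fintype ι] [DecidableEq ι] [CommRing R]

theorem fromBlocks_zero₂₁_mem_symplecticGroup {A B D : Matrix ι ι R} (hAD : A * Dᵀ = 1)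
    (hAB : A * Bᵀ = B * Aᵀ) : fromBlocks A B 0 D ∈ symplecticGroup ι R := by
  have hDA : D * Aᵀ = 1 := by rw [← transpose_transpose D, ← transpose_mul, hAD, transpose_one]
  rw [SymplecticGroup.mem_iff, J, fromBlocks_transpose, fromBlocks_multiply, fromBlocks_multiply]
  simp [hAD, hDA, hAB]

section OneAddInverse

variable {Z D : Matrix ι ι R}

theorem sub_one_eq_neg_mul_of_one_add_mul_eq_one (hD : (1 + Z) * D = 1) :
    D - 1 = -(Z * D) := by
  rw [← hD, add_mul, one_mul]; abel

theorem commute_of_one_add_mul_eq_one (hD : (1 + Z) * D = 1) : Commute Z D := by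
  have hD' : D * (1 + Z) = 1 := mul_eq_one_comm.mp hD
  rw [add_mul, one_mul] at hD
  rw [mul_add, mul_one] at hD'
  exact (eq_sub_of_add_eq' hD).trans (eq_sub_of_add_eq' hD').symm

theorem sub_one_pow_eq_of_one_add_mul_eq_one (hD : (1 + Z) * D = 1) (j : ℕ) :
    (D - 1) ^ j = (-1) ^ j * (Z ^ j * D ^ j) := by
  rw [sub_one_eq_neg_mul_of_one_add_mul_eq_one hD, neg_pow,
    (commute_of_one_add_mul_eq_one hD).mul_pow]

theorem pow_mul_pow_eq_of_one_add_mul_eq_one {k : ℕ} (hZ : Z ^ (k + 1) = 0)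
    (hD : (1 + Z) * D = 1) (j : ℕ) : Z ^ k * D ^ j = Z ^ k := by
  have hZk : Z ^ k * (1 + Z) = Z ^ k := by rw [mul_add, mul_one, ← pow_succ, hZ, add_zero]
  induction j with
  | zero => rw [pow_zero, mul_one]
  | succ j ih => rw [pow_succ', ← mul_assoc, ← hZk, mul_assoc _ _ D, hD, mul_one, hZk, ih]

end OneAddInverse

section RegularUnipotent

variable {N D : Matrix ι ι R} {k : ℕ}

theorem fromBlocks_pow_two_mul_add_one (hN : N ^ (k + 1) = 0) (hD : (1 + Nᵀ) * D = 1) :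
    fromBlocks N D 0 (D - 1) ^ (2 * k + 1) = fromBlocks 0 ((-1) ^ k * (N ^ k * Nᵀ ^ k)) 0 0 := by
  have hZ : Nᵀ ^ (k + 1) = 0 := by rw [← transpose_pow, hN, transpose_zero]
  have hDk : (D - 1) ^ (k + 1) = 0 := by
    rw [sub_one_pow_eq_of_one_add_mul_eq_one hD, hZ, zero_mul, mul_zero]
  have hk : N ^ k * D * (D - 1) ^ k = (-1) ^ k * (N ^ k * Nᵀ ^ k) := by
    rw [mul_assoc, ((Commute.refl D).sub_right (Commute.one_right D)).pow_right k |>.eq,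
      sub_one_pow_eq_of_one_add_mul_eq_one hD, mul_assoc, mul_assoc, ← pow_succ,
      pow_mul_pow_eq_of_one_add_mul_eq_one hZ hD, ← mul_assoc,
      ((Commute.neg_one_right _).pow_right k).eq, mul_assoc]
  rw [fromBlocks_zero₂₁_pow_succ, pow_eq_zero_of_le (by omega) hN,
    pow_eq_zero_of_le (by omega) hDk, sum_eq_single_of_mem k (mem_range.mpr (by omega)),
    show 2 * k - k = k by omega, hk]
  intro i _ hik
  rcases lt_or_gt_of_ne hik with hlt | hgt
  · rw [pow_eq_zero_of_le (by omega) hDk, mul_zero]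
  · rw [pow_eq_zero_of_le (by omega) hN, zero_mul, zero_mul]

theorem fromBlocks_pow_two_mul_add_two (hN : N ^ (k + 1) = 0) (hD : (1 + Nᵀ) * D = 1) :
    fromBlocks N D 0 (D - 1) ^ (2 * k + 2) = 0 := by
  have hZ : Nᵀ ^ (k + 1) = 0 := by rw [← transpose_pow, hN, transpose_zero]
  rw [pow_succ, fromBlocks_pow_two_mul_add_one hN hD, fromBlocks_multiply,
    sub_one_eq_neg_mul_of_one_add_mul_eq_one hD]
  simp only [Matrix.zero_mul, Matrix.mul_zero, add_zero, Matrix.mul_neg, Matrix.mul_assoc,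
    ← Matrix.mul_assoc (Nᵀ ^ k), ← pow_succ, hZ, neg_zero, fromBlocks_zero]

theorem exists_mem_symplecticGroup_sub_one_pow_eq (hN : N ^ (k + 1) = 0) :
    ∃ M ∈ symplecticGroup ι R,
      (M - 1) ^ (2 * k + 1) = fromBlocks 0 ((-1) ^ k * (N ^ k * Nᵀ ^ k)) 0 0 ∧
        (M - 1) ^ (2 * k + 2) = 0 := by
  have hZ : Nᵀ ^ (k + 1) = 0 := by rw [← transpose_pow, hN, transpose_zero]
  obtain ⟨u, hu⟩ := IsNilpotent.isUnit_one_add ⟨k + 1, hZ⟩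
  set D : Matrix ι ι R := ↑u⁻¹
  have hD : (1 + Nᵀ) * D = 1 := by rw [← hu]; exact u.mul_inv
  have hAD : (1 + N) * Dᵀ = 1 := by
    rw [← transpose_transpose N, ← transpose_one, ← transpose_add, ← transpose_mul,
      mul_eq_one_comm.mp hD, transpose_one]
  have hM : fromBlocks (1 + N) D 0 D - 1 = fromBlocks N D 0 (D - 1) := by
    simp [← fromBlocks_one, sub_eq_add_neg, fromBlocks_neg, fromBlocks_add]
  refine ⟨fromBlocks (1 + N) D 0 D, fromBlocks_zero₂₁_mem_symplecticGroup hAD ?_, ?_⟩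
  · rw [hAD, ← transpose_transpose D, ← transpose_mul, hAD, transpose_one]
  · rw [hM]
    exact ⟨fromBlocks_pow_two_mul_add_one hN hD, fromBlocks_pow_two_mul_add_two hN hD⟩

end RegularUnipotent

theorem exists_mem_symplecticGroup_sub_one_pow_ne_zero (R : Type*) [CommRing R] [Nontrivial R]
    (n : ℕ) : ∃ M ∈ symplecticGroup (Fin (n + 1)) R,
      (M - 1) ^ (2 * n + 1) ≠ 0 ∧ (M - 1) ^ (2 * n + 2) = 0 := by
  obtain ⟨M, hM, hodd, heven⟩ :=
    exists_mem_symplecticGroup_sub_one_pow_eq (nilpotentJordanBlock_pow_self (R := R) (n + 1))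
  refine ⟨M, hM, fun h ↦ ?_, heven⟩
  rw [hodd, ← transpose_pow, nilpotentJordanBlock_succ_pow, transpose_single,
    single_mul_single_same, mul_one, ← fromBlocks_zero, fromBlocks_inj,
    neg_one_pow_mul_eq_zero_iff] at h
  simpa using congrFun₂ h.2.1 0 0

end Matrix

theorem exponent_p_part_symplecticGroup_natural_char_general (p k q : ℕ) (hp : p.Prime)
    (hq : q = p ^ k)
    (F : Type) [Field F] [Fintype F] (hF : Fintype.card F = q)
    (m a : ℕ) (hm : 1 ≤ m)
    (ha : 2 * m - 1 < p ^ a ∧ ∀ b : ℕ, 2 * m - 1 < p ^ b → a ≤ b) :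
    p ^ a ∣ Monoid.exponent (Matrix.symplecticGroup (Fin m) F) ∧
      ¬ p ^ (a + 1) ∣ Monoid.exponent (Matrix.symplecticGroup (Fin m) F) := by
  have := Fact.mk hp
  have : CharP F p := charP_of_card_eq_prime_pow (hF.trans hq)
  obtain ⟨n, rfl⟩ : ∃ n, m = n + 1 := ⟨m - 1, by omega⟩
  obtain ⟨b, rfl⟩ : ∃ b, a = b + 1 := Nat.exists_eq_add_one.mpr <| Nat.pos_of_ne_zero fun h ↦ by
    rw [h, pow_zero] at ha; omega
  have hb : p ^ b ≤ 2 * n + 1 := by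
    by_contra! h
    have := ha.2 b (by omega)
    omega
  obtain ⟨M, hM, hne, hzero⟩ := exists_mem_symplecticGroup_sub_one_pow_ne_zero F n
  have hord : orderOf (⟨M, hM⟩ : symplecticGroup (Fin (n + 1)) F) = p ^ (b + 1) := by
    rw [← orderOf_submonoid, ← orderOf_one_add_eq_prime_pow hne hzero hb ha.1, add_sub_cancel]
  refine ⟨hord ▸ Monoid.order_dvd_exponent _, ?_⟩
  rw [hp.pow_dvd_iff_le_factorization Monoid.exponent_ne_zero_of_finite, not_le, Nat.lt_succ_iff]
  refine Monoid.factorization_exponent_le_of_pow_prime_pow_eq_one hp fun g t hg ↦ ?_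
  refine Subtype.ext (pow_char_pow_eq_one_of_card_le (congrArg Subtype.val hg) ?_)
  simp only [Fintype.card_sum, Fintype.card_fin]
  omega

/-- Let `q = p^k` be a power of the prime `p`, `m ≥ 1`, and let `a` be the least
natural number with `p^a > 2m - 1`. Then the `p`-part of the exponent of
`Sp_{2m}(F_q)` is `p^a`. -/
theorem exponent_p_part_symplecticGroup_natural_char (p k q : ℕ) (hp : p.Prime)
    (hk : 1 ≤ k) (hq : q = p ^ k)
    (F : Type) [Field F] [Fintype F] (hF : Fintype.card F = q)
    (m a : ℕ) (hm : 1 ≤ m)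
    (ha : 2 * m - 1 < p ^ a ∧ ∀ b : ℕ, 2 * m - 1 < p ^ b → a ≤ b) :
    p ^ a ∣ Monoid.exponent (Matrix.symplecticGroup (Fin m) F) ∧
      ¬ p ^ (a + 1) ∣ Monoid.exponent (Matrix.symplecticGroup (Fin m) F) :=
  exponent_p_part_symplecticGroup_natural_char_general p k q hp hq F hF m a hm ha
end
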